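/- arXiv:2008.03887 — 3 statements merged into one kernel-verified Lean document; each statement's English description precedes it below -/
import Mathlib

section
/- Let G = K_{n_1} × ... × K_{n_t} with t ≥ 3 and n_i ≥ t+1 for all i. Then the paired domination number γ_pr(G) equals t+1 if t is odd and t+2 if t is even. -/
set_option linter.unusedVariables false
set_option linter.unnecessarySeqFocus false

open SimpleGraph

variable {V : Type*} {W : Type*}

/-- The direct (tensor) product of two simple graphs. -/
def SimpleGraph.tensor (G : SimpleGraph V) (H : SimpleGraph W) : SimpleGraph (V × W) where
  Adj p q := G.Adj p.1 q.1 ∧ H.Adj p.2 q.2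
  symm := ⟨fun p q h => ⟨h.1.symm, h.2.symm⟩⟩
  loopless := ⟨fun p h => G.irrefl h.1⟩

/-- A dominating set: every vertex is in `D` or adjacent to a member of `D`. -/
def SimpleGraph.Dominating (G : SimpleGraph V) (D : Set V) : Prop :=
  ∀ v, ∃ u ∈ D, u = v ∨ G.Adj u v

/-- The domination number. -/
noncomputable def SimpleGraph.domNum (G : SimpleGraph V) : ℕ :=
  sInf {n | ∃ D : Set V, G.Dominating D ∧ D.ncard = n}

/-- A total dominating set. -/
def SimpleGraph.TotalDominating (G : SimpleGraph V) (D : Set V) : Prop :=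
  ∀ v, ∃ u ∈ D, G.Adj u v

/-- The total domination number. -/
noncomputable def SimpleGraph.totalDomNum (G : SimpleGraph V) : ℕ :=
  sInf {n | ∃ D : Set V, G.TotalDominating D ∧ D.ncard = n}

/-- A paired dominating set: dominating and the induced subgraph has a perfect matching. -/
def SimpleGraph.PairedDominating (G : SimpleGraph V) (D : Set V) : Prop :=
  G.Dominating D ∧ ∃ M : (G.induce D).Subgraph, M.IsPerfectMatching

/-- The paired domination number. -/
noncomputable def SimpleGraph.pairedDomNum (G : SimpleGraph V) : ℕ :=
  sInf {n | ∃ D : Set V, G.PairedDominating D ∧ D.ncard = n}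

/-- A 3-packing: vertices pairwise at distance greater than 3. -/
def SimpleGraph.Packing3 (G : SimpleGraph V) (P : Set V) : Prop :=
  P.Pairwise fun u v => ¬G.Reachable u v ∨ 3 < G.dist u v

/-- The 3-packing number. -/
noncomputable def SimpleGraph.packNum3 (G : SimpleGraph V) : ℕ :=
  sSup {n | ∃ P : Set V, G.Packing3 P ∧ P.ncard = n}

/-- A minimal dominating set. -/
def SimpleGraph.MinimalDominating (G : SimpleGraph V) (D : Set V) : Prop :=
  G.Dominating D ∧ ∀ D' ⊆ D, G.Dominating D' → D' = D

/-- The upper domination number. -/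
noncomputable def SimpleGraph.upperDomNum (G : SimpleGraph V) : ℕ :=
  sSup {n | ∃ D : Set V, G.MinimalDominating D ∧ D.ncard = n}

/-- `G` has no isolated vertices. -/
def SimpleGraph.NoIsolated (G : SimpleGraph V) : Prop := ∀ v, ∃ u, G.Adj u v

/-- Direct product of complete graphs `K_{n 0} × ... × K_{n (t-1)}`:
tuples adjacent iff they differ in every coordinate. -/
def prodCompleteGraphs {t : ℕ} (n : Fin t → ℕ) : SimpleGraph (∀ i, Fin (n i)) where
  Adj a b := a ≠ b ∧ ∀ i, a i ≠ b i
  symm := ⟨fun a b h => ⟨h.1.symm, fun i => (h.2 i).symm⟩⟩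
  loopless := ⟨fun a h => h.1 rfl⟩

/-- `G` together with a new pendant vertex (`none`) attached to `v`. -/
def addPendant (G : SimpleGraph V) (v : V) : SimpleGraph (Option V) where
  Adj x y :=
    match x, y with
    | some a, some b => G.Adj a b
    | some a, none => a = v
    | none, some b => b = v
    | none, none => False
  symm := by
    constructor
    rintro (_ | a) (_ | b) h <;> simp_all [SimpleGraph.adj_comm]
  loopless := by
    constructor
    rintro (_ | a) h <;> simp_all

/-- `G` with a path on `ℓ` vertices appended to vertex `u` via a bridge. -/
def appendPath (G : SimpleGraph V) (u : V) (ℓ : ℕ) : SimpleGraph (V ⊕ Fin ℓ) where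
  Adj x y :=
    match x, y with
    | Sum.inl a, Sum.inl b => G.Adj a b
    | Sum.inl a, Sum.inr j => a = u ∧ (j : ℕ) = 0
    | Sum.inr i, Sum.inl b => b = u ∧ (i : ℕ) = 0
    | Sum.inr i, Sum.inr j => (i : ℕ) + 1 = j ∨ (j : ℕ) + 1 = i
  symm := by
    constructor
    rintro (a | i) (b | j) h <;> simp_all [SimpleGraph.adj_comm] <;> tauto
  loopless := by
    constructor
    rintro (a | i) h <;> simp_all

/-- `G` with a pendant path on two vertices `(v,1)–(v,2)` attached to each vertex `(v,0)`. -/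
def attachPaths2 (G : SimpleGraph V) : SimpleGraph (V × Fin 3) where
  Adj p q :=
    (p.2 = 0 ∧ q.2 = 0 ∧ G.Adj p.1 q.1) ∨
    (p.1 = q.1 ∧ ((p.2 = 0 ∧ q.2 = 1) ∨ (p.2 = 1 ∧ q.2 = 0) ∨
      (p.2 = 1 ∧ q.2 = 2) ∨ (p.2 = 2 ∧ q.2 = 1)))
  symm := by
    constructor
    rintro ⟨a, i⟩ ⟨b, j⟩ h <;> simp_all [SimpleGraph.adj_comm] <;> tauto
  loopless := by
    constructor
    rintro ⟨a, i⟩ h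
    rcases h with ⟨-, -, h⟩ | ⟨-, h⟩
    · exact G.irrefl h
    · rcases h with ⟨h1, h2⟩ | ⟨h1, h2⟩ | ⟨h1, h2⟩ | ⟨h1, h2⟩ <;> simp_all

/-! A set of at most `t` vertices never dominates, by a diagonal argument, and paired dominating
sets have even size; this gives the lower bound. Conversely the `t + 1` constant vertices
`(k, …, k)`, `k ≤ t`, form a dominating clique: for odd `t` it has a perfect matching, and for
even `t` one extra vertex adjacent to `(0, …, 0)` is matched with it. -/

namespace SimpleGraph

variable {G : SimpleGraph V}

lemma Subgraph.IsMatching.exists_isPerfectMatching_induce {M : G.Subgraph} (hM : M.IsMatching) :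
    ∃ M' : (G.induce M.verts).Subgraph, M'.IsPerfectMatching := by
  refine ⟨M.comap (Embedding.induce M.verts).toHom, Subgraph.isPerfectMatching_iff.mpr ?_⟩
  rintro ⟨v, hv⟩
  obtain ⟨w, hvw, huniq⟩ := hM hv
  exact ⟨⟨w, M.edge_vert hvw.symm⟩, ⟨M.adj_sub hvw, hvw⟩, fun u hu => Subtype.ext (huniq u hu.2)⟩

lemma IsClique.exists_isMatching_insert {K : Set V} (hK : G.IsClique K) (hfin : K.Finite)
    (hodd : Odd K.ncard) {u y : V} (hu : u ∈ K) (hy : y ∉ K) (huy : G.Adj u y) :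
    ∃ M : G.Subgraph, M.verts = K ∪ {y} ∧ M.IsMatching := by
  have heven : Even (K \ {u}).ncard := by
    rw [Set.ncard_sdiff_singleton_of_mem hu]
    exact Nat.Odd.sub_odd hodd odd_one
  obtain ⟨M, hMverts, hM⟩ :=
    ((hK.subset Set.sdiff_subset).even_iff_exists_isMatching hfin.sdiff).mp heven
  have hpair := Subgraph.IsMatching.subgraphOfAdj huy
  refine ⟨M ⊔ G.subgraphOfAdj huy, ?_, hM.sup hpair ?_⟩
  · rw [Subgraph.verts_sup, hMverts, subgraphOfAdj_verts]
    ext v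
    by_cases v = u <;> simp_all
  · rw [hM.support_eq_verts, hpair.support_eq_verts, hMverts, subgraphOfAdj_verts]
    simp only [Set.disjoint_left, Set.mem_sdiff, Set.mem_insert_iff, Set.mem_singleton_iff]
    rintro v ⟨hv, hvu⟩ (rfl | rfl)
    exacts [hvu rfl, hy hv]

lemma Dominating.mono {D D' : Set V} (hD : G.Dominating D) (hDD' : D ⊆ D') : G.Dominating D' :=
  fun v => (hD v).imp fun _ hu => ⟨hDD' hu.1, hu.2⟩

lemma Subgraph.IsMatching.pairedDominating {M : G.Subgraph} (hM : M.IsMatching)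
    (hD : G.Dominating M.verts) : G.PairedDominating M.verts :=
  ⟨hD, hM.exists_isPerfectMatching_induce⟩

lemma PairedDominating.even_ncard [Finite V] {D : Set V} (hD : G.PairedDominating D) :
    Even D.ncard := by
  obtain ⟨-, M, hM⟩ := hD
  have := Fintype.ofFinite D
  rw [← Nat.card_coe_set_eq, Nat.card_eq_fintype_card]
  exact hM.even_card

lemma pairedDomNum_eq {m : ℕ} (hex : ∃ D, G.PairedDominating D ∧ D.ncard = m)
    (hle : ∀ D, G.PairedDominating D → m ≤ D.ncard) : G.pairedDomNum = m := by
  obtain ⟨D, hD, rfl⟩ := hex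
  refine le_antisymm (Nat.sInf_le ⟨D, hD, rfl⟩) (le_csInf ⟨_, D, hD, rfl⟩ ?_)
  rintro _ ⟨D', hD', rfl⟩
  exact hle D' hD'

end SimpleGraph

namespace prodCompleteGraphs

variable {t : ℕ} {n : Fin t → ℕ}

lemma adj_iff (ht : 0 < t) {a b : ∀ i, Fin (n i)} :
    (prodCompleteGraphs n).Adj a b ↔ ∀ i, a i ≠ b i :=
  ⟨And.right, fun h => ⟨fun hab => h ⟨0, ht⟩ (congrFun hab _), h⟩⟩

/- The diagonal `v i := d i i` agrees with each `d j` in coordinate `j`, so it is dominated only if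
it lies in the range; then changing `v` in one coordinate `m` to a value avoided by all `d j m`
(possible as `t < n m`) gives an undominated vertex. -/
theorem not_dominating_range (ht : 2 ≤ t) (hn : ∀ i, t + 1 ≤ n i)
    (d : Fin t → ∀ i, Fin (n i)) : ¬(prodCompleteGraphs n).Dominating (Set.range d) := by
  intro hD
  let v : ∀ i, Fin (n i) := fun i => d i i
  by_cases hv : v ∈ Set.range d
  · obtain ⟨m, hm⟩ := hv
    obtain ⟨a, ha⟩ : ∃ a, a ∉ Set.range fun j => d j m := by
      by_contra! h
      have := Fintype.card_le_of_surjective _ h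
      simp only [Fintype.card_fin] at this
      linarith [hn m]
    obtain ⟨i, him⟩ : ∃ i, i ≠ m :=
      Fintype.exists_ne_of_one_lt_card (by rw [Fintype.card_fin]; omega) m
    obtain ⟨_, ⟨j, rfl⟩, heq | hadj⟩ := hD (Function.update v m a)
    · exact ha ⟨j, by simp only [heq, Function.update_self]⟩
    · by_cases hjm : j = m
      · subst hjm
        exact hadj.2 i (by rw [hm, Function.update_of_ne him])
      · exact hadj.2 j (Function.update_of_ne hjm a v).symm
  · obtain ⟨_, ⟨j, rfl⟩, heq | hadj⟩ := hD v
    · exact hv ⟨j, heq⟩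
    · exact hadj.2 j rfl

theorem le_ncard_of_dominating (ht : 2 ≤ t) (hn : ∀ i, t + 1 ≤ n i)
    {D : Set (∀ i, Fin (n i))} (hD : (prodCompleteGraphs n).Dominating D) : t + 1 ≤ D.ncard := by
  by_contra! hlt
  obtain ⟨u₀, hu₀, -⟩ := hD fun i => ⟨0, by linarith [hn i]⟩
  have : Fintype D := Fintype.ofFinite D
  obtain ⟨f, hf⟩ : ∃ f : Fin t → D, f.Surjective := by
    refine Function.exists_surjective_iff.mpr ⟨⟨fun _ => ⟨u₀, hu₀⟩⟩, ?_⟩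
    refine Function.Embedding.nonempty_of_card_le ?_
    rw [Fintype.card_fin, ← Nat.card_eq_fintype_card, Nat.card_coe_set_eq]
    omega
  refine not_dominating_range ht hn (fun j => f j) (hD.mono ?_)
  intro u hu
  obtain ⟨j, hj⟩ := hf ⟨u, hu⟩
  exact ⟨j, congrArg Subtype.val hj⟩

def constVertex (hn : ∀ i, t + 1 ≤ n i) (k : Fin (t + 1)) : ∀ i, Fin (n i) :=
  fun i => Fin.castLE (hn i) k

lemma constVertex_injective (hn : ∀ i, t + 1 ≤ n i) (ht : 0 < t) : (constVertex hn).Injective :=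
  fun _ _ hab => Fin.castLE_injective _ (congrFun hab ⟨0, ht⟩)

lemma isClique_range_constVertex (hn : ∀ i, t + 1 ≤ n i) (ht : 0 < t) :
    (prodCompleteGraphs n).IsClique (Set.range (constVertex hn)) := by
  rintro _ ⟨a, rfl⟩ _ ⟨b, rfl⟩ hab
  exact (adj_iff ht).mpr fun i h => hab (congrArg _ (Fin.castLE_injective _ h))

lemma ncard_range_constVertex (hn : ∀ i, t + 1 ≤ n i) (ht : 0 < t) :
    (Set.range (constVertex hn)).ncard = t + 1 := by
  rw [Set.ncard_range_of_injective (constVertex_injective hn ht), Nat.card_fin]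

/- A vertex has at most `t` distinct coordinate values, so some `k ≤ t` is none of them. -/
lemma dominating_range_constVertex (hn : ∀ i, t + 1 ≤ n i) (ht : 0 < t) :
    (prodCompleteGraphs n).Dominating (Set.range (constVertex hn)) := by
  intro v
  obtain ⟨k, hk, hkv⟩ := Finset.exists_mem_notMem_of_card_lt_card
    (s := Finset.univ.image fun i => (v i : ℕ)) (t := Finset.range (t + 1))
    (Finset.card_image_le.trans_lt (by simp))
  refine ⟨_, Set.mem_range_self ⟨k, Finset.mem_range.mp hk⟩, Or.inr ?_⟩
  exact (adj_iff ht).mpr fun i h =>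
    hkv (Finset.mem_image.mpr ⟨i, Finset.mem_univ _, congrArg Fin.val h.symm⟩)

theorem exists_pairedDominating_ncard_of_odd (hn : ∀ i, t + 1 ≤ n i) (hodd : Odd t) :
    ∃ D, (prodCompleteGraphs n).PairedDominating D ∧ D.ncard = t + 1 := by
  have ht : 0 < t := hodd.pos
  obtain ⟨M, hMverts, hM⟩ := ((isClique_range_constVertex hn ht).even_iff_exists_isMatching
    (Set.toFinite _)).mp (by rw [ncard_range_constVertex hn ht]; exact hodd.add_one)
  refine ⟨M.verts, hM.pairedDominating ?_, ?_⟩ <;> rw [hMverts]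
  exacts [dominating_range_constVertex hn ht, ncard_range_constVertex hn ht]

theorem exists_pairedDominating_ncard_of_even (hn : ∀ i, t + 1 ≤ n i) (ht : 2 ≤ t)
    (heven : Even t) : ∃ D, (prodCompleteGraphs n).PairedDominating D ∧ D.ncard = t + 2 := by
  have ht₀ : 0 < t := by omega
  let y : ∀ i, Fin (n i) := fun i =>
    if (i : ℕ) = 0 then ⟨2, by linarith [hn i]⟩ else ⟨1, by linarith [hn i]⟩
  have hy : y ∉ Set.range (constVertex hn) := by
    rintro ⟨k, hk⟩
    have h₀ := congrArg Fin.val (congrFun hk ⟨0, ht₀⟩)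
    have h₁ := congrArg Fin.val (congrFun hk ⟨1, by omega⟩)
    simp [y, constVertex] at h₀ h₁
    omega
  have hadj : (prodCompleteGraphs n).Adj (constVertex hn 0) y :=
    (adj_iff ht₀).mpr fun i h => by
      have := congrArg Fin.val h
      simp only [constVertex, y] at this
      split_ifs at this <;> simp at this
  obtain ⟨M, hMverts, hM⟩ := (isClique_range_constVertex hn ht₀).exists_isMatching_insert
    (Set.toFinite _) (by rw [ncard_range_constVertex hn ht₀]; exact heven.add_one)
    (Set.mem_range_self 0) hy hadj
  refine ⟨M.verts, hM.pairedDominating ?_, ?_⟩ <;> rw [hMverts]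
  · exact (dominating_range_constVertex hn ht₀).mono Set.subset_union_left
  · rw [Set.union_singleton, Set.ncard_insert_of_notMem hy, ncard_range_constVertex hn ht₀]

end prodCompleteGraphs

theorem stmt2 {t : ℕ} (ht : 3 ≤ t) (n : Fin t → ℕ) (hn : ∀ i, t + 1 ≤ n i) :
    (prodCompleteGraphs n).pairedDomNum = if Odd t then t + 1 else t + 2 := by
  refine pairedDomNum_eq ?_ fun D hD => ?_
  · split_ifs with hodd
    · exact prodCompleteGraphs.exists_pairedDominating_ncard_of_odd hn hodd
    · exact prodCompleteGraphs.exists_pairedDominating_ncard_of_even hn (by omega)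
        (Nat.not_odd_iff_even.mp hodd)
  · have hdom := prodCompleteGraphs.le_ncard_of_dominating (by omega) hn hD.1
    have heven := hD.even_ncard
    split_ifs with hodd
    · exact hdom
    · rw [Nat.not_odd_iff_even, Nat.even_iff] at hodd
      rw [Nat.even_iff] at heven
      omega
end

section
/- If T_1 and T_2 are trees (each with at least one edge), then γ_pr(T_1 × T_2) ≥ (1/2)·γ_pr(T_1)·γ_pr(T_2). -/
set_option linter.unusedVariables false
set_option linter.unnecessarySeqFocus false

open SimpleGraph

variable {V : Type*} {W : Type*}

/-! In a tree rooted at `r`, repeatedly take a deepest vertex `u` that is not yet dominated, add it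
to `P` and match its parent with its grandparent (near the root, or when the grandparent is
already matched, the new pair contains `u` instead). The new pair dominates every vertex within
distance three of `u` that is no deeper than `u`, so `P` stays a 3-packing, and at the end the
matched vertices form a paired dominating set `D` with `|D| ≤ 2|P|`. Conversely, in any graph the
matched pairs dominating distinct vertices of a 3-packing `P` are disjoint, so every paired
dominating set has at least `2|P|` vertices. Finally `P₁ × P₂` is a 3-packing of `T₁ × T₂`, which
has the paired dominating set `D₁ × D₂`, so `γ_pr(T₁) γ_pr(T₂) ≤ 4 |P₁| |P₂| ≤ 2 γ_pr(T₁ × T₂)`. -/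

namespace SimpleGraph

lemma Hom.edist_le {G : SimpleGraph V} {H : SimpleGraph W} (f : G →g H) (u v : V) :
    H.edist (f u) (f v) ≤ G.edist u v := by
  by_cases huv : G.Reachable u v
  · obtain ⟨w, hw⟩ := huv.exists_walk_length_eq_edist
    calc H.edist (f u) (f v) ≤ (w.map f).length := SimpleGraph.edist_le _
      _ = G.edist u v := by rw [Walk.length_map, hw]
  · rw [edist_eq_top_of_not_reachable huv]
    exact le_top

lemma not_reachable_or_three_lt_dist_iff {G : SimpleGraph V} {u v : V} :
    ¬G.Reachable u v ∨ 3 < G.dist u v ↔ 3 < G.edist u v := by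
  by_cases huv : G.Reachable u v
  · rw [← huv.coe_dist_eq_edist]
    simp [huv]
  · simpa [huv, edist_eq_top_of_not_reachable huv] using ENat.natCast_lt_top 3

lemma packing3_iff {G : SimpleGraph V} {P : Set V} :
    G.Packing3 P ↔ P.Pairwise fun u v => 3 < G.edist u v := by
  simp only [Packing3, not_reachable_or_three_lt_dist_iff]

lemma Walk.dist_le_length_of_mem_support {G : SimpleGraph V} {u v x : V} (w : G.Walk u v)
    (hx : x ∈ w.support) : G.dist u x ≤ w.length := by
  classical
  exact (dist_le (w.takeUntil x hx)).trans (w.length_takeUntil_le_length hx)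

def Dominates (G : SimpleGraph V) (D : Set V) (v : V) : Prop :=
  ∃ u ∈ D, u = v ∨ G.Adj u v

lemma Dominates.edist_le_one {G : SimpleGraph V} {D : Set V} {v : V} (h : G.Dominates D v) :
    ∃ u ∈ D, G.edist u v ≤ 1 := by
  obtain ⟨u, hu, huv⟩ := h
  exact ⟨u, hu, edist_le_one_iff_adj_or_eq.mpr huv.symm⟩

lemma Dominates.mono {G : SimpleGraph V} {D D' : Set V} {v : V} (h : G.Dominates D v)
    (hDD' : D ⊆ D') : G.Dominates D' v :=
  h.imp fun _ ⟨hu, huv⟩ => ⟨hDD' hu, huv⟩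

def tensorFst (G : SimpleGraph V) (H : SimpleGraph W) : G.tensor H →g G :=
  ⟨Prod.fst, fun h => h.1⟩

def tensorSnd (G : SimpleGraph V) (H : SimpleGraph W) : G.tensor H →g H :=
  ⟨Prod.snd, fun h => h.2⟩

lemma Packing3.tensor {G : SimpleGraph V} {H : SimpleGraph W} {P : Set V} {Q : Set W}
    (hP : G.Packing3 P) (hQ : H.Packing3 Q) : (G.tensor H).Packing3 (P ×ˢ Q) := by
  rw [packing3_iff] at *
  rintro ⟨u, x⟩ ⟨hu, hx⟩ ⟨v, y⟩ ⟨hv, hy⟩ hne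
  by_cases huv : u = v
  · have hxy : x ≠ y := fun h => hne (by rw [huv, h])
    exact (hQ hx hy hxy).trans_le ((tensorSnd G H).edist_le (u, x) (v, y))
  · exact (hP hu hv huv).trans_le ((tensorFst G H).edist_le (u, x) (v, y))

lemma pairedDominating_iff {G : SimpleGraph V} {D : Set V} :
    G.PairedDominating D ↔ G.Dominating D ∧ ∃ M : G.Subgraph, M.IsMatching ∧ M.verts = D := by
  refine and_congr_right' ⟨fun ⟨M, hM⟩ => ?_, fun ⟨M, hM, hD⟩ => ?_⟩
  · refine ⟨M.map (Embedding.induce (G := G) D).toHom,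
      hM.1.map _ (Embedding.induce (G := G) D).injective, ?_⟩
    rw [Subgraph.map_verts, hM.2.verts_eq_univ, Set.image_univ]
    exact Subtype.range_coe
  · subst hD
    refine ⟨(G.induce M.verts).toSubgraph M.coe fun _ _ h => M.adj_sub h, ?_⟩
    rw [Subgraph.isPerfectMatching_iff]
    intro v
    obtain ⟨w, hvw, huniq⟩ := hM v.2
    exact ⟨⟨w, M.edge_vert hvw.symm⟩, hvw, fun w' h => Subtype.ext (huniq _ h)⟩

lemma PairedDominating.totalDominating {G : SimpleGraph V} {D : Set V}
    (hD : G.PairedDominating D) : G.TotalDominating D := by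
  obtain ⟨hdom, M, hM, rfl⟩ := pairedDominating_iff.mp hD
  intro v
  obtain ⟨u, hu, rfl | huv⟩ := hdom v
  · obtain ⟨w, huw, -⟩ := hM hu
    exact ⟨w, M.edge_vert huw.symm, (M.adj_sub huw).symm⟩
  · exact ⟨u, hu, huv⟩

lemma TotalDominating.tensor {G : SimpleGraph V} {H : SimpleGraph W} {D₁ : Set V} {D₂ : Set W}
    (h₁ : G.TotalDominating D₁) (h₂ : H.TotalDominating D₂) :
    (G.tensor H).TotalDominating (D₁ ×ˢ D₂) := by
  rintro ⟨v, w⟩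
  obtain ⟨u₁, hu₁, hv⟩ := h₁ v
  obtain ⟨u₂, hu₂, hw⟩ := h₂ w
  exact ⟨(u₁, u₂), ⟨hu₁, hu₂⟩, hv, hw⟩

lemma TotalDominating.dominating {G : SimpleGraph V} {D : Set V} (hD : G.TotalDominating D) :
    G.Dominating D := fun v => (hD v).imp fun _ ⟨hu, huv⟩ => ⟨hu, Or.inr huv⟩

def Subgraph.tensor {G : SimpleGraph V} {H : SimpleGraph W} (M₁ : G.Subgraph)
    (M₂ : H.Subgraph) : (G.tensor H).Subgraph where
  verts := M₁.verts ×ˢ M₂.verts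
  Adj p q := M₁.Adj p.1 q.1 ∧ M₂.Adj p.2 q.2
  adj_sub h := ⟨M₁.adj_sub h.1, M₂.adj_sub h.2⟩
  edge_vert h := ⟨M₁.edge_vert h.1, M₂.edge_vert h.2⟩
  symm := ⟨fun _ _ h => ⟨h.1.symm, h.2.symm⟩⟩

lemma Subgraph.IsMatching.tensor {G : SimpleGraph V} {H : SimpleGraph W} {M₁ : G.Subgraph}
    {M₂ : H.Subgraph} (h₁ : M₁.IsMatching) (h₂ : M₂.IsMatching) : (M₁.tensor M₂).IsMatching := by
  rintro ⟨v, w⟩ (⟨hv, hw⟩ : v ∈ M₁.verts ∧ w ∈ M₂.verts)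
  obtain ⟨v', hv', huniq₁⟩ := h₁ hv
  obtain ⟨w', hw', huniq₂⟩ := h₂ hw
  exact ⟨(v', w'), ⟨hv', hw'⟩, fun q hq => Prod.ext (huniq₁ _ hq.1) (huniq₂ _ hq.2)⟩

lemma PairedDominating.tensor {G : SimpleGraph V} {H : SimpleGraph W} {D₁ : Set V} {D₂ : Set W}
    (h₁ : G.PairedDominating D₁) (h₂ : H.PairedDominating D₂) :
    (G.tensor H).PairedDominating (D₁ ×ˢ D₂) := by
  obtain ⟨-, M₁, hM₁, rfl⟩ := pairedDominating_iff.mp h₁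
  obtain ⟨-, M₂, hM₂, rfl⟩ := pairedDominating_iff.mp h₂
  exact pairedDominating_iff.mpr ⟨(h₁.totalDominating.tensor h₂.totalDominating).dominating,
    M₁.tensor M₂, hM₁.tensor hM₂, rfl⟩

lemma Packing3.two_mul_ncard_le [Finite V] {G : SimpleGraph V} {P D : Set V}
    (hP : G.Packing3 P) (hD : G.PairedDominating D) : 2 * P.ncard ≤ D.ncard := by
  obtain ⟨hdom, M, hM, rfl⟩ := pairedDominating_iff.mp hD
  choose d hdM hd using fun v => Dominates.edist_le_one (hdom v)
  choose! μ hμ using fun x (hx : x ∈ M.verts) => (hM hx).exists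
  have hμ_edist : ∀ v, G.edist (d v) (μ (d v)) ≤ 1 := fun v =>
    edist_le_one_iff_adj_or_eq.mpr (Or.inl (M.adj_sub (hμ _ (hdM v))))
  have hclose : ∀ u ∈ P, ∀ v ∈ P, G.edist (d u) (d v) ≤ 1 → u = v := by
    intro u hu v hv h
    by_contra hne
    refine (packing3_iff.mp hP hu hv hne).not_ge ?_
    calc G.edist u v ≤ G.edist u (d v) + G.edist (d v) v := G.edist_triangle
      _ ≤ G.edist u (d u) + G.edist (d u) (d v) + G.edist (d v) v := by
          gcongr; exact G.edist_triangle
      _ ≤ 1 + 1 + 1 := by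
          gcongr
          · rw [edist_comm]; exact hd u
          · exact hd v
      _ = 3 := by norm_num
  let g : V × Bool → V := fun z => cond z.2 (μ (d z.1)) (d z.1)
  have hg : Set.InjOn g (P ×ˢ Set.univ) := by
    rintro ⟨u, i⟩ ⟨hu, -⟩ ⟨v, j⟩ ⟨hv, -⟩ h
    obtain rfl : u = v := by
      refine hclose u hu v hv ?_
      cases i <;> cases j <;> simp only [g, cond_false, cond_true] at h
      · simp [h]
      · rw [h, edist_comm]; exact hμ_edist v
      · rw [← h]; exact hμ_edist u
      · rw [hM.eq_of_adj_right (hμ _ (hdM u)) (h ▸ hμ _ (hdM v))]; simp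
    have hne : d u ≠ μ (d u) := (M.adj_sub (hμ _ (hdM u))).ne
    cases i <;> cases j <;> simp only [g, cond_false, cond_true] at h
    exacts [rfl, absurd h hne, absurd h.symm hne, rfl]
  calc 2 * P.ncard = (P ×ˢ (Set.univ : Set Bool)).ncard := by
        rw [Set.ncard_prod, Set.ncard_univ, Nat.card_eq_fintype_card, Fintype.card_bool, mul_comm]
    _ ≤ M.verts.ncard := Set.ncard_le_ncard_of_injOn g
        (by rintro ⟨u, _ | _⟩ - <;> simp [g, hdM, M.edge_vert (hμ _ (hdM u)).symm]) hg

lemma Connected.exists_adj_dist_add_one_eq {G : SimpleGraph V} (hG : G.Connected) (r : V) {v : V}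
    (hv : v ≠ r) : ∃ p, G.Adj v p ∧ G.dist r p + 1 = G.dist r v := by
  obtain ⟨w, hw⟩ := hG.exists_walk_length_eq_dist v r
  cases w with
  | nil => exact absurd rfl hv
  | @cons _ p _ hvp w =>
    refine ⟨p, hvp, ?_⟩
    have hpr : G.dist p r ≤ w.length := dist_le w
    have hvr : G.dist v r ≤ G.dist p r + 1 := by
      simpa [add_comm, dist_eq_one_iff_adj.mpr hvp] using
        hG.dist_triangle (u := v) (v := p) (w := r)
    rw [dist_comm (u := r), dist_comm (u := r)]
    simp only [Walk.length_cons] at hw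
    omega

lemma IsTree.eq_of_adj_of_dist_add_one_eq {T : SimpleGraph V} (hT : T.IsTree) {r v p q : V}
    (hp : T.Adj v p) (hq : T.Adj v q) (hdp : T.dist r p + 1 = T.dist r v)
    (hdq : T.dist r q + 1 = T.dist r v) : p = q := by
  obtain ⟨w, hw, -⟩ := hT.connected.exists_path_of_dist r v
  have hparent : ∀ p, T.Adj v p → T.dist r p + 1 = T.dist r v → p = w.penultimate := by
    intro p hp hdp
    obtain ⟨wp, hwp, hwpl⟩ := hT.connected.exists_path_of_dist r p
    have hv : v ∉ wp.support := fun hv => by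
      have := wp.dist_le_length_of_mem_support hv
      omega
    exact hT.isAcyclic.eq_penultimate_of_adj_end hw hp
      (hT.isAcyclic.mem_support_of_ne_mem_support_of_adj_of_isPath hw hwp hp hv)
  rw [hparent p hp hdp, hparent q hq hdq]

/- Depth changes by one along every edge and a vertex has only one neighbour above it, so a walk
of length at most three from `u` that does not end deeper than `u` ends next to `p` or `g`. -/
lemma IsTree.dominates_of_edist_le_three {T : SimpleGraph V} (hT : T.IsTree) {r u p g v : V}
    (hup : T.Adj u p) (hpg : T.Adj p g) (hdp : T.dist r p + 1 = T.dist r u)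
    (hdg : T.dist r g + 1 = T.dist r p) (hdv : T.dist r v ≤ T.dist r u) (huv : T.edist u v ≤ 3) :
    T.Dominates {p, g} v := by
  have hstep : ∀ x y, T.Adj x y → T.dist r y = T.dist r x + 1 ∨ T.dist r x = T.dist r y + 1 :=
    fun x y hxy => hT.dist_eq_dist_add_one_of_adj r hxy |>.symm
  have hup' : ∀ x y z, T.Adj x y → T.Adj x z → T.dist r y + 1 = T.dist r x →
      T.dist r z + 1 = T.dist r x → y = z := fun _ _ _ => hT.eq_of_adj_of_dist_add_one_eq
  obtain ⟨w, hw⟩ := (hT.connected u v).exists_walk_length_eq_edist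
  have hw3 : w.length ≤ 3 := by exact_mod_cast hw ▸ huv
  clear hw huv
  simp only [Dominates, Set.mem_insert_iff, Set.mem_singleton_iff, exists_eq_or_imp,
    exists_eq_left]
  rcases w with _ | ⟨h₁, _ | ⟨h₂, _ | ⟨h₃, _ | ⟨h₄, w⟩⟩⟩⟩
  · grind [SimpleGraph.adj_comm]
  · grind [SimpleGraph.adj_comm]
  · grind [SimpleGraph.adj_comm]
  · grind [SimpleGraph.adj_comm]
  · simp only [Walk.length_cons] at hw3
    omega

lemma IsTree.exists_adj_adj_forall_dominates {T : SimpleGraph V} (hT : T.IsTree) (r : V)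
    (he : ∃ a b, T.Adj a b) (u : V) :
    ∃ a b, T.Adj u a ∧ T.Adj a b ∧
      ∀ v, T.dist r v ≤ T.dist r u → T.edist u v ≤ 3 → T.Dominates {a, b} v := by
  have hroot : ∀ x, T.dist r x = 0 → x = r := fun x hx =>
    (hT.connected.dist_eq_zero_iff.mp hx).symm
  by_cases hur : u = r
  · subst hur
    obtain ⟨a, b, hab⟩ := he
    have : Nontrivial V := ⟨⟨a, b, hab.ne⟩⟩
    obtain ⟨c, hc⟩ := hT.connected.preconnected.exists_adj_of_nontrivial u
    refine ⟨c, u, hc, hc.symm, fun v hv _ => ⟨u, by simp, Or.inl ?_⟩⟩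
    exact (hroot v (by simpa using hv)).symm
  obtain ⟨p, hup, hdp⟩ := hT.connected.exists_adj_dist_add_one_eq r hur
  by_cases hpr : p = r
  · subst hpr
    refine ⟨p, u, hup, hup.symm, fun v hv _ => ⟨p, by simp, ?_⟩⟩
    by_cases hvp : v = p
    · exact Or.inl hvp.symm
    · obtain ⟨q, hvq, hdq⟩ := hT.connected.exists_adj_dist_add_one_eq p hvp
      rw [dist_self] at hdp
      exact Or.inr (hroot q (by omega) ▸ hvq.symm)
  · obtain ⟨g, hpg, hdg⟩ := hT.connected.exists_adj_dist_add_one_eq r hpr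
    exact ⟨p, g, hup, hpg, fun v hv huv =>
      hT.dominates_of_edist_le_three hup hpg hdp hdg hv huv⟩

/- The state of the greedy construction in `T` rooted at `r`: every vertex of `P` was, when added,
a deepest vertex not yet dominated by the matching. -/
structure IsGreedyPair (T : SimpleGraph V) (r : V) (M : T.Subgraph) (P : Finset V) : Prop where
  isMatching : M.IsMatching
  ncard_verts_le : M.verts.ncard ≤ 2 * P.card
  packing3 : T.Packing3 P
  undominated : ∀ a ∈ P, ∀ v, ¬T.Dominates M.verts v → T.dist r v ≤ T.dist r a ∧ 3 < T.edist a v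

lemma IsGreedyPair.bot (T : SimpleGraph V) (r : V) : IsGreedyPair T r ⊥ ∅ where
  isMatching _ hv := hv.elim
  ncard_verts_le := by simp
  packing3 := by simp [Packing3]
  undominated := by simp

lemma IsGreedyPair.notMem_of_not_dominates {T : SimpleGraph V} {r : V} {M : T.Subgraph}
    {P : Finset V} (h : IsGreedyPair T r M P) {u : V} (hu : ¬T.Dominates M.verts u) : u ∉ P :=
  fun huP => by simpa using (h.undominated u huP u hu).2

lemma IsGreedyPair.sup_subgraphOfAdj [DecidableEq V] {T : SimpleGraph V} {r : V}
    {M : T.Subgraph} {P : Finset V} (h : IsGreedyPair T r M P) {u x y : V} (hxy : T.Adj x y)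
    (hx : x ∉ M.verts) (hy : y ∉ M.verts) (hu : ¬T.Dominates M.verts u)
    (hmax : ∀ v, ¬T.Dominates M.verts v → T.dist r v ≤ T.dist r u)
    (hcov : ∀ v, T.dist r v ≤ T.dist r u → T.edist u v ≤ 3 → T.Dominates (M.verts ∪ {x, y}) v) :
    IsGreedyPair T r (M ⊔ T.subgraphOfAdj hxy) (insert u P) := by
  have hverts : (M ⊔ T.subgraphOfAdj hxy).verts = M.verts ∪ {x, y} := by
    simp [Subgraph.verts_sup]
  have hmono : ∀ v, ¬T.Dominates (M.verts ∪ {x, y}) v → ¬T.Dominates M.verts v :=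
    fun v hv hdom => hv (hdom.mono Set.subset_union_left)
  refine ⟨?_, ?_, ?_, ?_⟩
  · refine h.isMatching.sup (Subgraph.IsMatching.subgraphOfAdj hxy) ?_
    rw [h.isMatching.support_eq_verts, support_subgraphOfAdj]
    exact Set.disjoint_left.mpr fun z hz hz' => by rcases hz' with rfl | rfl <;> contradiction
  · rw [hverts, Finset.card_insert_of_notMem (h.notMem_of_not_dominates hu)]
    calc (M.verts ∪ {x, y}).ncard ≤ M.verts.ncard + ({x, y} : Set V).ncard :=
          Set.ncard_union_le _ _
      _ ≤ 2 * P.card + 2 := by gcongr; exacts [h.ncard_verts_le, (Set.ncard_pair hxy.ne).le]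
      _ = 2 * (P.card + 1) := by ring
  · rw [Finset.coe_insert, packing3_iff, Set.pairwise_insert]
    refine ⟨packing3_iff.mp h.packing3, fun a ha _ => ?_⟩
    have := (h.undominated a ha u hu).2
    exact ⟨edist_comm (G := T) ▸ this, this⟩
  · intro a ha v hv
    rw [hverts] at hv
    rcases Finset.mem_insert.mp ha with rfl | ha
    · exact ⟨hmax v (hmono v hv), lt_of_not_ge fun h3 => hv (hcov v (hmax v (hmono v hv)) h3)⟩
    · exact h.undominated a ha v (hmono v hv)

lemma IsGreedyPair.exists_card_lt [Fintype V] {T : SimpleGraph V} {r : V} {M : T.Subgraph}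
    {P : Finset V} (h : IsGreedyPair T r M P) (hT : T.IsTree) (he : ∃ a b, T.Adj a b) {v₀ : V}
    (hv₀ : ¬T.Dominates M.verts v₀) : ∃ M' P', IsGreedyPair T r M' P' ∧ P.card < P'.card := by
  classical
  obtain ⟨u, hu, hmax⟩ := Finset.exists_max_image
    (Finset.univ.filter fun v => ¬T.Dominates M.verts v) (T.dist r) ⟨v₀, by simpa using hv₀⟩
  simp only [Finset.mem_filter, Finset.mem_univ, true_and] at hu hmax
  have hnear : ∀ x, x = u ∨ T.Adj x u → x ∉ M.verts := fun x hx hxM => hu ⟨x, hxM, hx⟩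
  obtain ⟨a, b, hua, hab, hcov⟩ := hT.exists_adj_adj_forall_dominates r he u
  -- if `b` is already matched, the new edge is `ua` instead of `ab`
  obtain ⟨x, y, hxy, hx, hy, habxy⟩ : ∃ x y, T.Adj x y ∧ x ∉ M.verts ∧ y ∉ M.verts ∧
      ({a, b} : Set V) ⊆ M.verts ∪ {x, y} := by
    have ha := hnear a (Or.inr hua.symm)
    by_cases hb : b ∈ M.verts
    · refine ⟨u, a, hua, hnear u (Or.inl rfl), ha, ?_⟩
      simp [Set.insert_subset_iff, hb]
    · exact ⟨a, b, hab, ha, hb, Set.subset_union_right⟩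
  exact ⟨_, _, h.sup_subgraphOfAdj hxy hx hy hu hmax fun v hv huv => (hcov v hv huv).mono habxy,
    Finset.card_lt_card (Finset.ssubset_insert (h.notMem_of_not_dominates hu))⟩

lemma IsTree.exists_packing3_pairedDominating [Fintype V] {T : SimpleGraph V} (hT : T.IsTree)
    (he : ∃ a b, T.Adj a b) :
    ∃ P D : Set V, T.Packing3 P ∧ T.PairedDominating D ∧ D.ncard ≤ 2 * P.ncard := by
  classical
  obtain ⟨r⟩ := hT.connected.nonempty
  obtain ⟨P, hP, hmax⟩ := Finset.exists_max_image
    (Finset.univ.filter fun P : Finset V => ∃ M, IsGreedyPair T r M P) Finset.card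
    ⟨∅, by simpa using ⟨⊥, IsGreedyPair.bot T r⟩⟩
  obtain ⟨M, hM⟩ := (Finset.mem_filter.mp hP).2
  have hdom : T.Dominating M.verts := by
    by_contra hdom
    obtain ⟨v, hv⟩ := not_forall.mp hdom
    obtain ⟨M', P', hM', hlt⟩ := hM.exists_card_lt hT he hv
    exact (hmax P' (by simpa using ⟨M', hM'⟩)).not_gt hlt
  exact ⟨P, M.verts, hM.packing3, pairedDominating_iff.mpr ⟨hdom, M, hM.isMatching, rfl⟩,
    by simpa using hM.ncard_verts_le⟩

lemma pairedDomNum_le {G : SimpleGraph V} {D : Set V} (hD : G.PairedDominating D) :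
    G.pairedDomNum ≤ D.ncard :=
  Nat.sInf_le ⟨D, hD, rfl⟩

lemma Packing3.two_mul_ncard_le_pairedDomNum [Finite V] {G : SimpleGraph V} {P D : Set V}
    (hP : G.Packing3 P) (hD : G.PairedDominating D) : 2 * P.ncard ≤ G.pairedDomNum :=
  le_csInf ⟨_, D, hD, rfl⟩ fun _ ⟨_, hD', hn⟩ => hn ▸ hP.two_mul_ncard_le hD'

end SimpleGraph

theorem stmt8 {V W : Type*} [Fintype V] [Fintype W] (T1 : SimpleGraph V) (T2 : SimpleGraph W)
    (h1 : T1.IsTree) (h2 : T2.IsTree) (he1 : ∃ a b, T1.Adj a b) (he2 : ∃ a b, T2.Adj a b) :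
    T1.pairedDomNum * T2.pairedDomNum ≤ 2 * (T1.tensor T2).pairedDomNum := by
  obtain ⟨P₁, D₁, hP₁, hD₁, hcard₁⟩ := h1.exists_packing3_pairedDominating he1
  obtain ⟨P₂, D₂, hP₂, hD₂, hcard₂⟩ := h2.exists_packing3_pairedDominating he2
  have hlower := (hP₁.tensor hP₂).two_mul_ncard_le_pairedDomNum (hD₁.tensor hD₂)
  rw [Set.ncard_prod] at hlower
  calc T1.pairedDomNum * T2.pairedDomNum ≤ (2 * P₁.ncard) * (2 * P₂.ncard) :=
        Nat.mul_le_mul ((pairedDomNum_le hD₁).trans hcard₁) ((pairedDomNum_le hD₂).trans hcard₂)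
    _ = 2 * (2 * (P₁.ncard * P₂.ncard)) := by ring
    _ ≤ 2 * (T1.tensor T2).pairedDomNum := Nat.mul_le_mul_left 2 hlower
end

section
/- Let G be a vertex-transitive graph, and let G^{·ℓ} be the graph obtained by attaching a path on ℓ vertices to G via a bridge. Then γ_pr(G^{·ℓ}) ≥ γ_pr(G). -/
set_option linter.unusedVariables false
set_option linter.unnecessarySeqFocus false

open SimpleGraph

variable {V : Type*} {W : Type*}

/-!
Let `D` be a paired dominating set of `G^{·ℓ}`, paired off along edges by `P`. The vertices of
`G` that `P` pairs with vertices of `G` form a set `S` such that `G[S]` has a perfect matching. A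
vertex of `G` not dominated by `S` can only be dominated through the bridge, so it is `u` or a
neighbour of `u`, and `D` meets the path. Then `D` contains, besides `S`, a path vertex and its
partner, so adding to `S` the vertex `u` and a neighbour of `u` outside `S` yields a paired
dominating set of `G` of size at most `|D|`.
-/

namespace SimpleGraph

/-- A perfect matching of `G[D]`, encoded as an involution of `D` along edges of `G`; unlike a
subgraph, it is easy to modify. -/
def IsPairing (G : SimpleGraph V) (D : Set V) (P : V → V) : Prop :=
  ∀ v ∈ D, P v ∈ D ∧ G.Adj v (P v) ∧ P (P v) = v

section Pairing

variable {G : SimpleGraph V} {D : Set V} {P : V → V}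

lemma IsPairing.exists_isPerfectMatching (hP : G.IsPairing D P) :
    ∃ M : (G.induce D).Subgraph, M.IsPerfectMatching := by
  refine ⟨⟨Set.univ, fun a b => P a = b, ?_, fun _ => Set.mem_univ _, ?_⟩, ?_,
    fun _ => Set.mem_univ _⟩
  · rintro ⟨a, ha⟩ ⟨b, hb⟩ (rfl : P a = b)
    exact (hP a ha).2.1
  · constructor
    rintro ⟨a, ha⟩ ⟨b, hb⟩ (rfl : P a = b)
    exact (hP a ha).2.2
  · rintro ⟨a, ha⟩ -
    exact ⟨⟨P a, (hP a ha).1⟩, rfl, fun c (hc : P a = c) => Subtype.ext hc.symm⟩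

lemma Subgraph.IsPerfectMatching.exists_isPairing {M : (G.induce D).Subgraph}
    (hM : M.IsPerfectMatching) : ∃ P, G.IsPairing D P := by
  classical
  choose f hf hf_unique using fun v : D => hM.1 (hM.2 v)
  refine ⟨fun v => if h : v ∈ D then f ⟨v, h⟩ else v, fun v hv => ?_⟩
  have hff : f (f ⟨v, hv⟩) = ⟨v, hv⟩ := (hf_unique _ _ (hf ⟨v, hv⟩).symm).symm
  simp only [dif_pos hv, dif_pos (f ⟨v, hv⟩).2, Subtype.coe_eta, hff, and_true]
  exact ⟨(f ⟨v, hv⟩).2, M.adj_sub (hf ⟨v, hv⟩)⟩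

lemma IsPairing.insert_edge (hP : G.IsPairing D P) {a b : V} (hab : G.Adj a b) (ha : a ∉ D)
    (hb : b ∉ D) : ∃ P', G.IsPairing (insert a (insert b D)) P' := by
  classical
  refine ⟨fun v => if v = a then b else if v = b then a else P v, ?_⟩
  rintro v (rfl | rfl | hv)
  · simp [hab, hab.ne.symm]
  · simp [hab.symm, hab.ne.symm]
  · obtain ⟨hPv, hadj, hPPv⟩ := hP v hv
    have hne : ∀ x ∈ D, x ≠ a ∧ x ≠ b := fun x hx => ⟨ne_of_mem_of_not_mem hx ha,
      ne_of_mem_of_not_mem hx hb⟩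
    simp [(hne v hv).1, (hne v hv).2, (hne _ hPv).1, (hne _ hPv).2, hPv, hadj, hPPv]

end Pairing

lemma exists_pairedDominating [Fintype V] {G : SimpleGraph V} (hG : G.NoIsolated) :
    ∃ D, G.PairedDominating D := by
  classical
  suffices h : ∀ A : Finset V, ∃ D P, G.IsPairing D P ∧ ∀ v ∈ A, ∃ d ∈ D, d = v ∨ G.Adj d v by
    obtain ⟨D, P, hP, hdom⟩ := h Finset.univ
    exact ⟨D, fun v => hdom v (Finset.mem_univ v), hP.exists_isPerfectMatching⟩
  intro A
  induction A using Finset.induction_on with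
  | empty => exact ⟨∅, id, fun _ h => h.elim, by simp⟩
  | @insert a A _ ih =>
    obtain ⟨D, P, hP, hdom⟩ := ih
    by_cases ha : ∃ d ∈ D, d = a ∨ G.Adj d a
    · exact ⟨D, P, hP, fun v hv => (Finset.mem_insert.mp hv).elim (· ▸ ha) (hdom v)⟩
    obtain ⟨b, hba⟩ := hG a
    have haD : a ∉ D := fun h => ha ⟨a, h, Or.inl rfl⟩
    have hbD : b ∉ D := fun h => ha ⟨b, h, Or.inr hba⟩
    obtain ⟨P', hP'⟩ := hP.insert_edge hba.symm haD hbD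
    refine ⟨_, P', hP', fun v hv => ?_⟩
    obtain rfl | hv := Finset.mem_insert.mp hv
    · exact ⟨v, Set.mem_insert _ _, Or.inl rfl⟩
    obtain ⟨d, hd, hdv⟩ := hdom v hv
    exact ⟨d, Set.mem_insert_of_mem _ (Set.mem_insert_of_mem _ hd), hdv⟩

lemma pairedDomNum_le_pairedDomNum {G : SimpleGraph V} {H : SimpleGraph W}
    (hH : ∃ D, H.PairedDominating D)
    (h : ∀ D, H.PairedDominating D → ∃ D', G.PairedDominating D' ∧ D'.ncard ≤ D.ncard) :
    G.pairedDomNum ≤ H.pairedDomNum := by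
  obtain ⟨D₀, hD₀⟩ := hH
  refine le_csInf ⟨_, D₀, hD₀, rfl⟩ ?_
  rintro _ ⟨D, hD, rfl⟩
  obtain ⟨D', hD', hle⟩ := h D hD
  calc G.pairedDomNum ≤ D'.ncard := Nat.sInf_le ⟨D', hD', rfl⟩
    _ ≤ D.ncard := hle

section CutVertex

open Sum

variable {G : SimpleGraph V} {H : SimpleGraph (V ⊕ W)} {u : V} {D : Set (V ⊕ W)}
  {P : V ⊕ W → V ⊕ W}

def pairedInl (D : Set (V ⊕ W)) (P : V ⊕ W → V ⊕ W) : Set V :=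
  {v | inl v ∈ D ∧ ∃ w, P (inl v) = inl w}

lemma image_inl_pairedInl_subset : inl '' pairedInl D P ⊆ D := by
  rintro _ ⟨v, hv, rfl⟩
  exact hv.1

lemma isPairing_pairedInl (hHG : ∀ a b, H.Adj (inl a) (inl b) → G.Adj a b)
    (hP : H.IsPairing D P) :
    G.IsPairing (pairedInl D P) (fun v => (P (inl v)).elim id fun _ => v) := by
  rintro v ⟨hvD, w, hw⟩
  obtain ⟨hwD, hadj, hPPv⟩ := hP _ hvD
  have hPw : P (inl w) = inl v := hw ▸ hPPv
  rw [hw] at hwD hadj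
  simp only [hw, hPw, elim_inl, id, and_true]
  exact ⟨⟨hwD, v, hPw⟩, hHG v w hadj⟩

lemma ncard_pairedInl_add_two_le (hP : H.IsPairing D P) (hD : D.Finite) {i : W}
    (hi : inr i ∈ D) : (pairedInl D P).ncard + 2 ≤ D.ncard := by
  obtain ⟨hPi, hadj, hPPi⟩ := hP _ hi
  have hPi_notMem : P (inr i) ∉ inl '' pairedInl D P := by
    rintro ⟨w, ⟨-, w', hw'⟩, hw⟩
    rw [hw, hPPi] at hw'
    exact inr_ne_inl hw'
  have hi_notMem : inr i ∉ insert (P (inr i)) (inl '' pairedInl D P) := by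
    rintro (h | ⟨w, -, h⟩)
    · exact hadj.ne h
    · exact inl_ne_inr h
  have hsub : insert (inr i) (insert (P (inr i)) (inl '' pairedInl D P)) ⊆ D :=
    Set.insert_subset hi (Set.insert_subset hPi image_inl_pairedInl_subset)
  calc (pairedInl D P).ncard + 2
      = (insert (inr i) (insert (P (inr i)) (inl '' pairedInl D P))).ncard := by
        have hfin : (inl '' pairedInl D P).Finite := hD.subset image_inl_pairedInl_subset
        rw [Set.ncard_insert_of_notMem hi_notMem (hfin.insert _),
          Set.ncard_insert_of_notMem hPi_notMem hfin,
          Set.ncard_image_of_injective _ inl_injective]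
    _ ≤ D.ncard := Set.ncard_le_ncard hsub hD

lemma exists_inr_mem_of_not_dominated (hHG : ∀ a b, H.Adj (inl a) (inl b) → G.Adj a b)
    (hcut : ∀ a j, H.Adj (inl a) (inr j) → a = u) (hP : H.IsPairing D P)
    (hdom : H.Dominating D) {v : V} (hv : ¬∃ w ∈ pairedInl D P, w = v ∨ G.Adj w v) :
    (u = v ∨ G.Adj u v) ∧ ∃ i, inr i ∈ D := by
  obtain ⟨d | i, hd, hdv⟩ := hdom (inl v)
  · have hwv : d = v ∨ G.Adj d v := hdv.imp inl.inj (hHG d v)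
    rcases hPd : P (inl d) with w | j
    · exact (hv ⟨d, ⟨hd, w, hPd⟩, hwv⟩).elim
    · obtain ⟨hjD, hadj, -⟩ := hP _ hd
      rw [hPd] at hjD hadj
      obtain rfl := hcut d j hadj
      exact ⟨hwv, j, hjD⟩
  · obtain h | h := hdv
    · exact (inr_ne_inl h).elim
    · exact ⟨Or.inl (hcut v i h.symm).symm, i, hd⟩

lemma PairedDominating.exists_restrict (hHG : ∀ a b, H.Adj (inl a) (inl b) → G.Adj a b)
    (hcut : ∀ a j, H.Adj (inl a) (inr j) → a = u) (hu : ∃ w, G.Adj w u)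
    (hD : H.PairedDominating D) (hfin : D.Finite) :
    ∃ D' : Set V, G.PairedDominating D' ∧ D'.ncard ≤ D.ncard := by
  obtain ⟨hdom, M, hM⟩ := hD
  obtain ⟨P, hP⟩ := hM.exists_isPairing
  set S := pairedInl D P
  have hS := isPairing_pairedInl hHG hP
  by_cases hSdom : G.Dominating S
  · refine ⟨S, ⟨hSdom, hS.exists_isPerfectMatching⟩, ?_⟩
    rw [← Set.ncard_image_of_injective S inl_injective]
    exact Set.ncard_le_ncard image_inl_pairedInl_subset hfin
  obtain ⟨v, hv⟩ := not_forall.mp hSdom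
  obtain ⟨huv, i, hi⟩ := exists_inr_mem_of_not_dominated hHG hcut hP hdom hv
  have huS : u ∉ S := fun h => hv ⟨u, h, huv⟩
  obtain ⟨w, huw, hwS⟩ : ∃ w, G.Adj u w ∧ w ∉ S := by
    rcases huv with rfl | huv
    · obtain ⟨w, hw⟩ := hu
      exact ⟨w, hw.symm, fun h => hv ⟨w, h, Or.inr hw⟩⟩
    · exact ⟨v, huv, fun h => hv ⟨v, h, Or.inl rfl⟩⟩
  obtain ⟨Q, hQ⟩ := hS.insert_edge huw huS hwS
  refine ⟨insert u (insert w S), ⟨fun x => ?_, hQ.exists_isPerfectMatching⟩, ?_⟩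
  · by_cases hx : ∃ y ∈ S, y = x ∨ G.Adj y x
    · obtain ⟨y, hy, hyx⟩ := hx
      exact ⟨y, Set.mem_insert_of_mem _ (Set.mem_insert_of_mem _ hy), hyx⟩
    · exact ⟨u, Set.mem_insert _ _,
        (exists_inr_mem_of_not_dominated hHG hcut hP hdom hx).1⟩
  · calc (insert u (insert w S)).ncard ≤ (insert w S).ncard + 1 := Set.ncard_insert_le _ _
      _ ≤ S.ncard + 2 := by have := Set.ncard_insert_le w S; omega
      _ ≤ D.ncard := ncard_pairedInl_add_two_le hP hfin hi

end CutVertex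

end SimpleGraph

lemma appendPath_noIsolated {G : SimpleGraph V} (hG : G.NoIsolated) (u : V) (ℓ : ℕ) :
    (appendPath G u ℓ).NoIsolated := by
  rintro (a | i)
  · obtain ⟨w, hw⟩ := hG a
    exact ⟨Sum.inl w, hw⟩
  · rcases Nat.eq_zero_or_pos i with h | h
    · exact ⟨Sum.inl u, rfl, h⟩
    · exact ⟨Sum.inr ⟨i - 1, by omega⟩, Or.inl (show (i : ℕ) - 1 + 1 = i by omega)⟩

theorem stmt13_general {V : Type*} [Fintype V] (G : SimpleGraph V) (hG : G.NoIsolated)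
    (u : V) (ℓ : ℕ) :
    G.pairedDomNum ≤ (appendPath G u ℓ).pairedDomNum := by
  refine pairedDomNum_le_pairedDomNum (exists_pairedDominating (appendPath_noIsolated hG u ℓ))
    fun D hD => ?_
  exact hD.exists_restrict (H := appendPath G u ℓ) (fun _ _ h => h) (fun _ _ h => h.1) (hG u)
    D.toFinite

theorem stmt13 {V : Type*} [Fintype V] (G : SimpleGraph V) (hG : G.NoIsolated)
    (hvt : ∀ u v : V, ∃ e : G ≃g G, e u = v) (u : V) (ℓ : ℕ) :
    G.pairedDomNum ≤ (appendPath G u ℓ).pairedDomNum :=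
  stmt13_general G hG u ℓ
end
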